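/- Let V be a finite nonnegative compactly supported Borel measure on ℝ³ satisfying the local Kato condition. Then the family of functions g ↦ (R⁻₀(λ²)Vg)(x) := ∫ e^{-iλ|x−y|}/(4π|x−y|) g(y) dV(y), for g measurable with |g| ≤ 1, is uniformly bounded and uniformly equicontinuous on ℝ³. -/

import Mathlib

open MeasureTheory Metric Filter ENNReal

noncomputable def resKernelNeg (lam : ℝ) (x y : EuclideanSpace ℝ (Fin 3)) : ℂ :=
  Complex.exp (-(Complex.I * (lam : ℂ) * (‖x - y‖ : ℝ))) /
    ((4 * Real.pi * ‖x - y‖ : ℝ) : ℂ)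

lemma norm_exp_I_mul' (t : ℝ) (lam : ℝ) :
    ‖Complex.exp (-(Complex.I * (lam : ℂ) * (t : ℂ)))‖ = 1 := by
  rw [Complex.norm_exp]
  simp

lemma norm_resKernelNeg (lam : ℝ) (x y : EuclideanSpace ℝ (Fin 3)) :
    ‖resKernelNeg lam x y‖ = (4 * Real.pi)⁻¹ * ‖x - y‖⁻¹ := by
  unfold resKernelNeg
  rw [norm_div, norm_exp_I_mul']
  rw [Complex.norm_real, Real.norm_eq_abs,
    abs_of_nonneg (by positivity : (0:ℝ) ≤ 4 * Real.pi * ‖x - y‖)]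
  rw [one_div, mul_inv]

lemma norm_exp_sub_exp' (a b : ℝ) :
    ‖Complex.exp ((a:ℂ) * Complex.I) - Complex.exp ((b:ℂ) * Complex.I)‖ ≤ 2 * |a - b| := by
  have key : Complex.exp ((a:ℂ) * Complex.I) - Complex.exp ((b:ℂ) * Complex.I)
      = Complex.exp ((b:ℂ) * Complex.I) * (Complex.exp (((a - b : ℝ) : ℂ) * Complex.I) - 1) := by
    rw [mul_sub, ← Complex.exp_add, mul_one]
    push_cast
    ring_nf
  rw [key, norm_mul]
  have hb : ‖Complex.exp ((b:ℂ) * Complex.I)‖ = 1 := by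
    rw [Complex.norm_exp]; simp
  rw [hb, one_mul]
  have habs : ‖((a - b : ℝ) : ℂ) * Complex.I‖ = |a - b| := by
    push_cast
    rw [norm_mul, Complex.norm_I, mul_one, ← Complex.ofReal_sub, Complex.norm_real, Real.norm_eq_abs]
  rcases le_or_gt (|a - b|) 1 with h | h
  · have := Complex.norm_exp_sub_one_le (x := ((a - b : ℝ) : ℂ) * Complex.I) (by rw [habs]; exact h)
    rw [habs] at this
    exact this
  · have h1 : ‖Complex.exp (((a - b : ℝ) : ℂ) * Complex.I) - 1‖ ≤ 2 := by
      calc ‖Complex.exp (((a - b : ℝ) : ℂ) * Complex.I) - 1‖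
          ≤ ‖Complex.exp (((a - b : ℝ) : ℂ) * Complex.I)‖ + ‖(1:ℂ)‖ := norm_sub_le _ _
        _ ≤ 2 := by
            rw [Complex.norm_exp]
            norm_num [Complex.add_re, Complex.mul_re]
    nlinarith

lemma kernel_lipschitz (lam r : ℝ) (hr : 0 < r) :
    ∃ L : ℝ, 0 < L ∧ ∀ s t : ℝ, r ≤ s → r ≤ t →
      ‖Complex.exp (-(Complex.I * (lam:ℂ) * (s:ℂ))) / ((4 * Real.pi * s : ℝ) : ℂ)
        - Complex.exp (-(Complex.I * (lam:ℂ) * (t:ℂ))) / ((4 * Real.pi * t : ℝ) : ℂ)‖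
      ≤ L * |s - t| := by
  have hπ : 0 < Real.pi := Real.pi_pos
  refine ⟨2 * |lam| * (4 * Real.pi * r)⁻¹ + (4 * Real.pi)⁻¹ * (r⁻¹ * r⁻¹), by positivity, ?_⟩
  intro s t hs ht
  have hs0 : 0 < s := lt_of_lt_of_le hr hs
  have ht0 : 0 < t := lt_of_lt_of_le hr ht
  set es := Complex.exp (-(Complex.I * (lam:ℂ) * (s:ℂ))) with hes
  set et := Complex.exp (-(Complex.I * (lam:ℂ) * (t:ℂ))) with het
  have hid : es / ((4 * Real.pi * s : ℝ) : ℂ) - et / ((4 * Real.pi * t : ℝ) : ℂ)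
      = (es - et) * ((4 * Real.pi * s : ℝ) : ℂ)⁻¹
        + et * (((4 * Real.pi * s : ℝ) : ℂ)⁻¹ - ((4 * Real.pi * t : ℝ) : ℂ)⁻¹) := by
    rw [div_eq_mul_inv, div_eq_mul_inv]; ring
  rw [hid]
  have h1 : ‖(es - et) * ((4 * Real.pi * s : ℝ) : ℂ)⁻¹‖
      ≤ (2 * |lam| * |s - t|) * (4 * Real.pi * r)⁻¹ := by
    rw [norm_mul]
    have hnorm_inv : ‖((4 * Real.pi * s : ℝ) : ℂ)⁻¹‖ = (4 * Real.pi * s)⁻¹ := by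
      rw [norm_inv, Complex.norm_real, Real.norm_eq_abs,
        abs_of_nonneg (by positivity : (0:ℝ) ≤ 4 * Real.pi * s)]
    rw [hnorm_inv]
    have hes' : es = Complex.exp (((-(lam * s) : ℝ) : ℂ) * Complex.I) := by
      rw [hes]; congr 1; push_cast; ring
    have het' : et = Complex.exp (((-(lam * t) : ℝ) : ℂ) * Complex.I) := by
      rw [het]; congr 1; push_cast; ring
    have hexp : ‖es - et‖ ≤ 2 * |lam| * |s - t| := by
      rw [hes', het']
      calc ‖_ - _‖ ≤ 2 * |(-(lam * s)) - (-(lam * t))| := norm_exp_sub_exp' _ _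
        _ = 2 * |lam| * |s - t| := by
            rw [mul_assoc, ← abs_mul,
              show (-(lam * s)) - (-(lam * t)) = -(lam * (s - t)) by ring, abs_neg]
    have hle : (4 * Real.pi * s)⁻¹ ≤ (4 * Real.pi * r)⁻¹ := by
      apply inv_anti₀ (by positivity)
      nlinarith
    exact mul_le_mul hexp hle (by positivity) (by positivity)
  have h2 : ‖et * (((4 * Real.pi * s : ℝ) : ℂ)⁻¹ - ((4 * Real.pi * t : ℝ) : ℂ)⁻¹)‖
      ≤ (4 * Real.pi)⁻¹ * (r⁻¹ * r⁻¹) * |s - t| := by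
    rw [norm_mul]
    have hnet : ‖et‖ = 1 := by
      rw [het, Complex.norm_exp]; simp
    rw [hnet, one_mul]
    have hcast : ((4 * Real.pi * s : ℝ) : ℂ)⁻¹ - ((4 * Real.pi * t : ℝ) : ℂ)⁻¹
        = (((4 * Real.pi * s)⁻¹ - (4 * Real.pi * t)⁻¹ : ℝ) : ℂ) := by push_cast; ring
    rw [hcast, Complex.norm_real, Real.norm_eq_abs]
    have hdiff : (4 * Real.pi * s)⁻¹ - (4 * Real.pi * t)⁻¹
        = (4 * Real.pi)⁻¹ * ((t - s) / (s * t)) := by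
      field_simp
    rw [hdiff, abs_mul, abs_of_nonneg (by positivity : (0:ℝ) ≤ (4 * Real.pi)⁻¹)]
    rw [mul_assoc]
    apply mul_le_mul_of_nonneg_left _ (by positivity)
    rw [abs_div, abs_of_nonneg (by positivity : (0:ℝ) ≤ s * t)]
    rw [div_le_iff₀ (by positivity)]
    have habs : |t - s| = |s - t| := abs_sub_comm t s
    rw [habs]
    have hst : r * r ≤ s * t := by nlinarith
    calc |s - t| = r⁻¹ * r⁻¹ * |s - t| * (r * r) := by
          field_simp
      _ ≤ r⁻¹ * r⁻¹ * |s - t| * (s * t) := by gcongr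
  refine le_trans (le_trans (norm_add_le _ _) (add_le_add h1 h2)) (le_of_eq (by ring))

lemma ball_lint_le {V : Measure (EuclideanSpace ℝ (Fin 3))} {r' : ℝ} {c : ℝ≥0∞}
    (hsup : (⨆ y : EuclideanSpace ℝ (Fin 3),
      ∫⁻ x in ball y r', ENNReal.ofReal ‖x - y‖⁻¹ ∂V) ≤ c)
    {s : Set (EuclideanSpace ℝ (Fin 3))} (z : EuclideanSpace ℝ (Fin 3))
    (hs : s ⊆ ball z r') :
    ∫⁻ y in s, ENNReal.ofReal ‖z - y‖⁻¹ ∂V ≤ c := by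
  calc ∫⁻ y in s, ENNReal.ofReal ‖z - y‖⁻¹ ∂V
      = ∫⁻ y in s, ENNReal.ofReal ‖y - z‖⁻¹ ∂V :=
        lintegral_congr fun y => by rw [norm_sub_rev]
    _ ≤ ∫⁻ y in ball z r', ENNReal.ofReal ‖y - z‖⁻¹ ∂V := lintegral_mono_set hs
    _ ≤ ⨆ y : EuclideanSpace ℝ (Fin 3),
          ∫⁻ x in ball y r', ENNReal.ofReal ‖x - y‖⁻¹ ∂V :=
        le_iSup (fun y => ∫⁻ x in ball y r', ENNReal.ofReal ‖x - y‖⁻¹ ∂V) z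
    _ ≤ c := hsup

lemma measurable_resKernelNeg (lam : ℝ) (x : EuclideanSpace ℝ (Fin 3)) :
    Measurable (fun y => resKernelNeg lam x y) := by
  unfold resKernelNeg
  have hnorm : Measurable (fun y : EuclideanSpace ℝ (Fin 3) => ‖x - y‖) :=
    (continuous_const.sub continuous_id).norm.measurable
  have hc : Measurable (fun y : EuclideanSpace ℝ (Fin 3) => ((‖x - y‖ : ℝ) : ℂ)) :=
    Complex.measurable_ofReal.comp hnorm
  exact (Complex.measurable_exp.comp ((measurable_const.mul hc).neg)).div
    (Complex.measurable_ofReal.comp ((measurable_const.mul hnorm)))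
/-- Let `V` be a finite nonnegative compactly supported Borel
measure on ℝ³ satisfying the local Kato condition.  Then the family of
functions `x ↦ (R₀⁻(λ²)Vg)(x) = ∫ e^{-iλ|x−y|}/(4π|x−y|) g(y) dV(y)`, as `g`
ranges over measurable functions with `|g| ≤ 1`, is uniformly bounded and
uniformly equicontinuous on ℝ³. -/
theorem stmt4 (V : Measure (EuclideanSpace ℝ (Fin 3))) [IsFiniteMeasure V]
    (hcpt : ∃ Kset : Set (EuclideanSpace ℝ (Fin 3)), IsCompact Kset ∧ V Ksetᶜ = 0)
    (hlocal : Tendsto (fun r : ℝ => ⨆ y : EuclideanSpace ℝ (Fin 3),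
        ∫⁻ x in ball y r, ENNReal.ofReal ‖x - y‖⁻¹ ∂V)
      (nhdsWithin 0 (Set.Ioi 0)) (nhds 0))
    (lam : ℝ) :
    (∃ B : ℝ, ∀ g : EuclideanSpace ℝ (Fin 3) → ℂ, Measurable g →
        (∀ y, ‖g y‖ ≤ 1) → ∀ x,
        ‖∫ y, resKernelNeg lam x y * g y ∂V‖ ≤ B) ∧
    (∀ ε : ℝ, 0 < ε → ∃ δ : ℝ, 0 < δ ∧
      ∀ g : EuclideanSpace ℝ (Fin 3) → ℂ, Measurable g → (∀ y, ‖g y‖ ≤ 1) →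
        ∀ x₁ x₂ : EuclideanSpace ℝ (Fin 3), dist x₁ x₂ < δ →
          ‖(∫ y, resKernelNeg lam x₁ y * g y ∂V) -
            (∫ y, resKernelNeg lam x₂ y * g y ∂V)‖ ≤ ε) := by
  have hπ : 0 < Real.pi := Real.pi_pos
  obtain ⟨r₀, hr₀lt, hr₀pos⟩ :=
    ((hlocal.eventually (gt_mem_nhds (zero_lt_one))).and eventually_mem_nhdsWithin).exists
  rw [Set.mem_Ioi] at hr₀pos
  have hglob : ∀ x, ∫⁻ y, ENNReal.ofReal ‖x - y‖⁻¹ ∂V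
      ≤ 1 + ENNReal.ofReal r₀⁻¹ * V Set.univ := by
    intro x
    rw [← lintegral_add_compl (fun y => ENNReal.ofReal ‖x - y‖⁻¹)
      (measurableSet_ball (x := x) (ε := r₀)) (μ := V)]
    refine add_le_add (ball_lint_le hr₀lt.le x (subset_refl _)) ?_
    calc ∫⁻ y in (ball x r₀)ᶜ, ENNReal.ofReal ‖x - y‖⁻¹ ∂V
        ≤ ∫⁻ _ in (ball x r₀)ᶜ, ENNReal.ofReal r₀⁻¹ ∂V := by
          refine setLIntegral_mono' measurableSet_ball.compl fun y hy => ?_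
          apply ENNReal.ofReal_le_ofReal
          apply inv_anti₀ hr₀pos
          rw [Set.mem_compl_iff, mem_ball, not_lt] at hy
          rwa [dist_eq_norm, norm_sub_rev] at hy
      _ = ENNReal.ofReal r₀⁻¹ * V (ball x r₀)ᶜ := setLIntegral_const _ _
      _ ≤ ENNReal.ofReal r₀⁻¹ * V Set.univ :=
          mul_le_mul_right (measure_mono (Set.subset_univ _)) _
  have hprod : ∀ (x : EuclideanSpace ℝ (Fin 3)) (g : EuclideanSpace ℝ (Fin 3) → ℂ),
      (∀ y, ‖g y‖ ≤ 1) →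
      ∫⁻ y, ENNReal.ofReal ‖resKernelNeg lam x y * g y‖ ∂V
        ≤ ENNReal.ofReal (4 * Real.pi)⁻¹ * (1 + ENNReal.ofReal r₀⁻¹ * V Set.univ) := by
    intro x g hg1
    calc ∫⁻ y, ENNReal.ofReal ‖resKernelNeg lam x y * g y‖ ∂V
        ≤ ∫⁻ y, ENNReal.ofReal (4 * Real.pi)⁻¹ * ENNReal.ofReal ‖x - y‖⁻¹ ∂V := by
          refine lintegral_mono fun y => ?_
          rw [← ENNReal.ofReal_mul (by positivity)]
          apply ENNReal.ofReal_le_ofReal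
          rw [norm_mul, norm_resKernelNeg]
          calc (4 * Real.pi)⁻¹ * ‖x - y‖⁻¹ * ‖g y‖
              ≤ (4 * Real.pi)⁻¹ * ‖x - y‖⁻¹ * 1 :=
                mul_le_mul_of_nonneg_left (hg1 y) (by positivity)
            _ = (4 * Real.pi)⁻¹ * ‖x - y‖⁻¹ := mul_one _
      _ = ENNReal.ofReal (4 * Real.pi)⁻¹ * ∫⁻ y, ENNReal.ofReal ‖x - y‖⁻¹ ∂V :=
          lintegral_const_mul' _ _ ENNReal.ofReal_ne_top
      _ ≤ _ := mul_le_mul_right (hglob x) _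
  have hfin : ENNReal.ofReal (4 * Real.pi)⁻¹ * (1 + ENNReal.ofReal r₀⁻¹ * V Set.univ) ≠ ⊤ := by
    finiteness
  have hint : ∀ (x : EuclideanSpace ℝ (Fin 3)) (g : EuclideanSpace ℝ (Fin 3) → ℂ),
      Measurable g → (∀ y, ‖g y‖ ≤ 1) →
      Integrable (fun y => resKernelNeg lam x y * g y) V := by
    intro x g hg hg1
    refine ⟨((measurable_resKernelNeg lam x).mul hg).aestronglyMeasurable, ?_⟩
    rw [hasFiniteIntegral_iff_norm]
    exact lt_of_le_of_lt (hprod x g hg1) hfin.lt_top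
  constructor
  · exact ⟨(ENNReal.ofReal (4 * Real.pi)⁻¹ * (1 + ENNReal.ofReal r₀⁻¹ * V Set.univ)).toReal,
      fun g hg hg1 x => le_trans (norm_integral_le_lintegral_norm _)
        (ENNReal.toReal_mono hfin (hprod x g hg1))⟩
  · intro ε hε
    have hcpos : (0:ℝ≥0∞) < ENNReal.ofReal (Real.pi * ε) :=
      ENNReal.ofReal_pos.mpr (by positivity)
    obtain ⟨r', hr'lt, hr'pos⟩ :=
      ((hlocal.eventually (gt_mem_nhds hcpos)).and eventually_mem_nhdsWithin).exists
    rw [Set.mem_Ioi] at hr'pos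
    set r : ℝ := r' / 3 with hrdef
    have hrpos : 0 < r := by positivity
    obtain ⟨L, hLpos, hLip⟩ := kernel_lipschitz lam r hrpos
    set T : ℝ := (V Set.univ).toReal with hTdef
    have hTnn : 0 ≤ T := ENNReal.toReal_nonneg
    set δ : ℝ := min r (ε / 2 / (L * (T + 1))) with hδdef
    have hδpos : 0 < δ := lt_min hrpos (by positivity)
    refine ⟨δ, hδpos, ?_⟩
    intro g hg hg1 x₁ x₂ hdist
    have hδr : δ ≤ r := min_le_left _ _
    rw [← integral_sub (hint x₁ g hg hg1) (hint x₂ g hg hg1)]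
    simp only [← sub_mul]
    refine le_trans (norm_integral_le_lintegral_norm _) ?_
    apply ENNReal.toReal_le_of_le_ofReal hε.le
    have hnear : ∫⁻ y in ball x₁ (2 * r),
        ENNReal.ofReal ‖(resKernelNeg lam x₁ y - resKernelNeg lam x₂ y) * g y‖ ∂V
        ≤ ENNReal.ofReal (ε / 2) := by
      have hpt : ∀ y, ENNReal.ofReal ‖(resKernelNeg lam x₁ y - resKernelNeg lam x₂ y) * g y‖
          ≤ ENNReal.ofReal ((4 * Real.pi)⁻¹ * ‖x₁ - y‖⁻¹)
            + ENNReal.ofReal ((4 * Real.pi)⁻¹ * ‖x₂ - y‖⁻¹) := by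
        intro y
        rw [← ENNReal.ofReal_add (by positivity) (by positivity)]
        apply ENNReal.ofReal_le_ofReal
        calc ‖(resKernelNeg lam x₁ y - resKernelNeg lam x₂ y) * g y‖
            ≤ ‖resKernelNeg lam x₁ y - resKernelNeg lam x₂ y‖ * 1 := by
              rw [norm_mul]
              exact mul_le_mul_of_nonneg_left (hg1 y) (norm_nonneg _)
          _ = ‖resKernelNeg lam x₁ y - resKernelNeg lam x₂ y‖ := mul_one _
          _ ≤ ‖resKernelNeg lam x₁ y‖ + ‖resKernelNeg lam x₂ y‖ := norm_sub_le _ _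
          _ = _ := by rw [norm_resKernelNeg, norm_resKernelNeg]
      have hmeas₁ : Measurable (fun y : EuclideanSpace ℝ (Fin 3) =>
          ENNReal.ofReal ((4 * Real.pi)⁻¹ * ‖x₁ - y‖⁻¹)) := by
        apply ENNReal.measurable_ofReal.comp
        exact measurable_const.mul ((continuous_const.sub continuous_id).norm.measurable.inv)
      have hsub1 : ball x₁ (2 * r) ⊆ ball x₁ r' := by
        apply ball_subset_ball; rw [hrdef]; linarith
      have hsub2 : ball x₁ (2 * r) ⊆ ball x₂ r' := by
        intro y hy
        rw [mem_ball] at hy ⊢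
        have h12 : dist x₁ x₂ < r := lt_of_lt_of_le hdist hδr
        calc dist y x₂ ≤ dist y x₁ + dist x₁ x₂ := dist_triangle _ _ _
          _ < 2 * r + r := by linarith
          _ = r' := by rw [hrdef]; ring
      have hA : ∫⁻ y in ball x₁ (2 * r), ENNReal.ofReal ((4 * Real.pi)⁻¹ * ‖x₁ - y‖⁻¹) ∂V
          ≤ ENNReal.ofReal (4 * Real.pi)⁻¹ * ENNReal.ofReal (Real.pi * ε) := by
        calc ∫⁻ y in ball x₁ (2 * r), ENNReal.ofReal ((4 * Real.pi)⁻¹ * ‖x₁ - y‖⁻¹) ∂V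
            = ENNReal.ofReal (4 * Real.pi)⁻¹
                * ∫⁻ y in ball x₁ (2 * r), ENNReal.ofReal ‖x₁ - y‖⁻¹ ∂V := by
              simp_rw [ENNReal.ofReal_mul (by positivity : (0:ℝ) ≤ (4 * Real.pi)⁻¹)]
              exact lintegral_const_mul' _ _ ENNReal.ofReal_ne_top
          _ ≤ _ := mul_le_mul_right (ball_lint_le hr'lt.le x₁ hsub1) _
      have hB : ∫⁻ y in ball x₁ (2 * r), ENNReal.ofReal ((4 * Real.pi)⁻¹ * ‖x₂ - y‖⁻¹) ∂V
          ≤ ENNReal.ofReal (4 * Real.pi)⁻¹ * ENNReal.ofReal (Real.pi * ε) := by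
        calc ∫⁻ y in ball x₁ (2 * r), ENNReal.ofReal ((4 * Real.pi)⁻¹ * ‖x₂ - y‖⁻¹) ∂V
            = ENNReal.ofReal (4 * Real.pi)⁻¹
                * ∫⁻ y in ball x₁ (2 * r), ENNReal.ofReal ‖x₂ - y‖⁻¹ ∂V := by
              simp_rw [ENNReal.ofReal_mul (by positivity : (0:ℝ) ≤ (4 * Real.pi)⁻¹)]
              exact lintegral_const_mul' _ _ ENNReal.ofReal_ne_top
          _ ≤ _ := mul_le_mul_right (ball_lint_le hr'lt.le x₂ hsub2) _
      calc ∫⁻ y in ball x₁ (2 * r),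
              ENNReal.ofReal ‖(resKernelNeg lam x₁ y - resKernelNeg lam x₂ y) * g y‖ ∂V
          ≤ ∫⁻ y in ball x₁ (2 * r), (ENNReal.ofReal ((4 * Real.pi)⁻¹ * ‖x₁ - y‖⁻¹)
              + ENNReal.ofReal ((4 * Real.pi)⁻¹ * ‖x₂ - y‖⁻¹)) ∂V :=
            lintegral_mono fun y => hpt y
        _ = ∫⁻ y in ball x₁ (2 * r), ENNReal.ofReal ((4 * Real.pi)⁻¹ * ‖x₁ - y‖⁻¹) ∂V
              + ∫⁻ y in ball x₁ (2 * r), ENNReal.ofReal ((4 * Real.pi)⁻¹ * ‖x₂ - y‖⁻¹) ∂V :=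
            lintegral_add_left hmeas₁ _
        _ ≤ ENNReal.ofReal (4 * Real.pi)⁻¹ * ENNReal.ofReal (Real.pi * ε)
              + ENNReal.ofReal (4 * Real.pi)⁻¹ * ENNReal.ofReal (Real.pi * ε) :=
            add_le_add hA hB
        _ = ENNReal.ofReal (ε / 2) := by
            rw [← ENNReal.ofReal_mul (by positivity),
              ← ENNReal.ofReal_add (by positivity) (by positivity)]
            congr 1
            field_simp
            ring
    have hfar : ∫⁻ y in (ball x₁ (2 * r))ᶜ,
        ENNReal.ofReal ‖(resKernelNeg lam x₁ y - resKernelNeg lam x₂ y) * g y‖ ∂V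
        ≤ ENNReal.ofReal (ε / 2) := by
      have hpt : ∀ y ∈ (ball x₁ (2 * r))ᶜ,
          ENNReal.ofReal ‖(resKernelNeg lam x₁ y - resKernelNeg lam x₂ y) * g y‖
            ≤ ENNReal.ofReal (L * δ) := by
        intro y hy
        apply ENNReal.ofReal_le_ofReal
        have hy1 : 2 * r ≤ ‖x₁ - y‖ := by
          rw [Set.mem_compl_iff, mem_ball, not_lt] at hy
          rwa [dist_eq_norm, norm_sub_rev] at hy
        have hy2 : r ≤ ‖x₂ - y‖ := by
          have h12 : ‖x₁ - x₂‖ ≤ r := by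
            rw [← dist_eq_norm]
            exact le_of_lt (lt_of_lt_of_le hdist hδr)
          have htri : ‖x₁ - y‖ ≤ ‖x₁ - x₂‖ + ‖x₂ - y‖ := by
            have h := norm_add_le (x₁ - x₂) (x₂ - y)
            rwa [sub_add_sub_cancel] at h
          linarith
        have hkey : ‖resKernelNeg lam x₁ y - resKernelNeg lam x₂ y‖
            ≤ L * |‖x₁ - y‖ - ‖x₂ - y‖| :=
          hLip ‖x₁ - y‖ ‖x₂ - y‖ (le_trans (by linarith) hy1) hy2
        calc ‖(resKernelNeg lam x₁ y - resKernelNeg lam x₂ y) * g y‖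
            ≤ ‖resKernelNeg lam x₁ y - resKernelNeg lam x₂ y‖ * 1 := by
              rw [norm_mul]
              exact mul_le_mul_of_nonneg_left (hg1 y) (norm_nonneg _)
          _ = ‖resKernelNeg lam x₁ y - resKernelNeg lam x₂ y‖ := mul_one _
          _ ≤ L * |‖x₁ - y‖ - ‖x₂ - y‖| := hkey
          _ ≤ L * δ := by
              apply mul_le_mul_of_nonneg_left _ hLpos.le
              calc |‖x₁ - y‖ - ‖x₂ - y‖| ≤ ‖(x₁ - y) - (x₂ - y)‖ := abs_norm_sub_norm_le _ _
                _ = ‖x₁ - x₂‖ := by congr 1; abel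
                _ = dist x₁ x₂ := (dist_eq_norm _ _).symm
                _ ≤ δ := hdist.le
      calc ∫⁻ y in (ball x₁ (2 * r))ᶜ,
              ENNReal.ofReal ‖(resKernelNeg lam x₁ y - resKernelNeg lam x₂ y) * g y‖ ∂V
          ≤ ∫⁻ _ in (ball x₁ (2 * r))ᶜ, ENNReal.ofReal (L * δ) ∂V :=
            setLIntegral_mono' measurableSet_ball.compl hpt
        _ = ENNReal.ofReal (L * δ) * V (ball x₁ (2 * r))ᶜ := setLIntegral_const _ _
        _ ≤ ENNReal.ofReal (L * δ) * V Set.univ :=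
            mul_le_mul_right (measure_mono (Set.subset_univ _)) _
        _ ≤ ENNReal.ofReal (ε / 2) := by
            rw [← ENNReal.ofReal_toReal (measure_ne_top V Set.univ), ← hTdef,
              ← ENNReal.ofReal_mul (by positivity)]
            apply ENNReal.ofReal_le_ofReal
            have hδ2 : δ ≤ ε / 2 / (L * (T + 1)) := min_le_right _ _
            have h2 : δ * (L * (T + 1)) ≤ ε / 2 := (le_div_iff₀ (by positivity)).mp hδ2
            nlinarith [mul_nonneg hLpos.le hδpos.le]
    calc ∫⁻ y, ENNReal.ofReal ‖(resKernelNeg lam x₁ y - resKernelNeg lam x₂ y) * g y‖ ∂V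
        = ∫⁻ y in ball x₁ (2 * r),
            ENNReal.ofReal ‖(resKernelNeg lam x₁ y - resKernelNeg lam x₂ y) * g y‖ ∂V
          + ∫⁻ y in (ball x₁ (2 * r))ᶜ,
            ENNReal.ofReal ‖(resKernelNeg lam x₁ y - resKernelNeg lam x₂ y) * g y‖ ∂V :=
          (lintegral_add_compl _ measurableSet_ball).symm
      _ ≤ ENNReal.ofReal (ε / 2) + ENNReal.ofReal (ε / 2) := add_le_add hnear hfar
      _ = ENNReal.ofReal ε := by
          rw [← ENNReal.ofReal_add (by positivity) (by positivity)]
          norm_num
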